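/- arXiv:2408.15015 — 2 statements merged into one kernel-verified Lean document; each statement's English description precedes it below -/
import Mathlib

section
/- Let X be a nonempty finite set, p a probability vector on X with positive entries, d : X × X → [0,∞), s_D ≥ 0, s_P ≥ 0, and f : (0,∞) → ℝ convex and differentiable with f(1) = 0; set g(a,b) := f(a/b) − (a/b)·f'(a/b). Let q be a probability vector on X with positive entries such that, with A(x,y) := exp(−s_D·d(x,y) − s_P·g(p(y), q(y))), one has c(y) := Σ_x p(x)A(x,y) / (Σ_i q(i)A(x,i)) = 1 for every y ∈ X, and define Q(y|x) := q(y)A(x,y)/Σ_i q(i)A(x,i). Then: (i) the output marginal of Q equals q; (ii) for every stochastic matrix Q' on X with positive output marginal Q'm, I(p,Q) + s_D·Σ_{x,y} p(x)Q(y|x)d(x,y) + s_P·D_f(p||q) ≤ I(p,Q') + s_D·Σ_{x,y} p(x)Q'(y|x)d(x,y) + s_P·D_f(p||Q'm); and consequently (iii) Q attains the rate-distortion-perception function at its own operating point, i.e. I(p,Q) = R(D,P) where D = Σ_{x,y} p(x)Q(y|x)d(x,y) and P = D_f(p||q). -/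
namespace RDP

variable {X : Type*}

/-- Output marginal of a channel `Q` under input distribution `p`. -/
noncomputable def marg [Fintype X] (p : X → ℝ) (Q : X → X → ℝ) (y : X) : ℝ :=
  ∑ x, p x * Q x y

/-- Mutual information `I(p,Q) = Σ_{x,y} p(x)Q(y|x) log(Q(y|x)/Qm(y))`
(the convention `0 · log 0 = 0` holds since `Real.log 0 = 0`). -/
noncomputable def mutInfo [Fintype X] (p : X → ℝ) (Q : X → X → ℝ) : ℝ :=
  ∑ x, ∑ y, p x * Q x y * Real.log (Q x y / marg p Q y)

/-- Average distortion `Σ_{x,y} p(x)Q(y|x) d(x,y)`. -/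
noncomputable def distortion [Fintype X] (p : X → ℝ) (d : X → X → ℝ) (Q : X → X → ℝ) : ℝ :=
  ∑ x, ∑ y, p x * Q x y * d x y

/-- f-divergence `D_f(p‖q) = Σ_x q(x) f(p(x)/q(x))`. -/
noncomputable def fDiv [Fintype X] (f : ℝ → ℝ) (p q : X → ℝ) : ℝ :=
  ∑ x, q x * f (p x / q x)

/-- `Q` is a stochastic matrix: nonnegative entries with unit row sums. -/
def IsStochastic [Fintype X] (Q : X → X → ℝ) : Prop :=
  (∀ x y, 0 ≤ Q x y) ∧ ∀ x, ∑ y, Q x y = 1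

/-- The rate-distortion-perception function
`R(D,P) = inf { I(p,Q) : Q stochastic, positive output marginal, distortion ≤ D, D_f ≤ P }`,
with values in `EReal` so that the infimum of the empty set is `⊤`. -/
noncomputable def RDPF [Fintype X] (p : X → ℝ) (d : X → X → ℝ) (f : ℝ → ℝ)
    (D P : ℝ) : EReal :=
  sInf {r : EReal | ∃ Q : X → X → ℝ, IsStochastic Q ∧ (∀ y, 0 < marg p Q y) ∧
    distortion p d Q ≤ D ∧ fDiv f p (marg p Q) ≤ P ∧ r = (mutInfo p Q : EReal)}

/-- The Lagrangian `V(Q) = I(p,Q) + s_D · E[d] + s_P · D_f(p‖Qm)`. -/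
noncomputable def Vfun [Fintype X] (p : X → ℝ) (d : X → X → ℝ) (sD sP : ℝ) (f : ℝ → ℝ)
    (Q : X → X → ℝ) : ℝ :=
  mutInfo p Q + sD * distortion p d Q + sP * fDiv f p (marg p Q)

/-- `μ` is a (complex) eigenvalue of the matrix `M`. -/
def HasEig [Fintype X] (M : Matrix X X ℂ) (μ : ℂ) : Prop :=
  ∃ v : X → ℂ, v ≠ 0 ∧ M.mulVec v = μ • v

/-!
Put `φ(x,y) = s_D d(x,y) + s_P g(p(y), q(y))`, so that `Q(y|x) = q(y) exp(-φ(x,y)) / Z(x)` is a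
Gibbs channel. Since `Q` has output marginal `q`, for every channel `Q'` with output marginal `r`
the measures `p(x)Q'(y|x)` and `p(x)Q(y|x) r(y)/q(y)` have the same mass, and Gibbs' inequality
between them reads `I(p,Q') + E_{Q'}[φ] ≥ -Σ_x p(x) log Z(x) = I(p,Q) + E_Q[φ]`.
The tangent line of `f` at `p(y)/q(y)` gives
`D_f(p‖r) ≥ Σ_y r(y) g(p(y), q(y)) + Σ_y p(y) f'(p(y)/q(y))`, with equality at `r = q`; so `s_P`
times this bound turns the previous inequality into minimality of the Lagrangian at `Q`.
A minimiser of the Lagrangian with nonnegative multipliers attains the rate-distortion-perception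
function at its own operating point.
-/

open Finset Real

theorem _root_.ConvexOn.add_mul_sub_le_of_hasDerivAt {S : Set ℝ} {f : ℝ → ℝ} {x y f'x : ℝ}
    (hf : ConvexOn ℝ S f) (hx : x ∈ S) (hy : y ∈ S) (hderiv : HasDerivAt f f'x x) :
    f x + f'x * (y - x) ≤ f y := by
  rcases lt_trichotomy x y with hxy | rfl | hyx
  · have h := hf.le_slope_of_hasDerivAt hx hy hxy hderiv
    rw [slope_def_field, le_div_iff₀ (sub_pos.mpr hxy)] at h
    linarith
  · simp
  · have h := hf.slope_le_of_hasDerivAt hy hx hyx hderiv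
    rw [slope_def_field, div_le_iff₀ (sub_pos.mpr hyx)] at h
    linarith

theorem _root_.Real.sub_le_mul_log_div {a b : ℝ} (ha : 0 ≤ a) (hb : 0 < b) :
    a - b ≤ a * log (a / b) := by
  have hkl := mul_nonneg hb.le (InformationTheory.klFun_nonneg (div_nonneg ha hb.le))
  have hexpand : b * InformationTheory.klFun (a / b) = a * log (a / b) + b - a := by
    rw [InformationTheory.klFun_apply]
    field_simp
  linarith

theorem _root_.Real.sum_mul_log_div_nonneg {ι : Type*} [Fintype ι] {a b : ι → ℝ}
    (ha : ∀ i, 0 ≤ a i) (hb : ∀ i, 0 < b i) (hab : ∑ i, a i = ∑ i, b i) :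
    0 ≤ ∑ i, a i * log (a i / b i) :=
  calc 0 = ∑ i, (a i - b i) := by rw [sum_sub_distrib, hab, sub_self]
    _ ≤ _ := sum_le_sum fun i _ => sub_le_mul_log_div (ha i) (hb i)

/-- The paper's `g(a, b)` is `tangentIntercept f f' (a / b)`. -/
def tangentIntercept (f f' : ℝ → ℝ) (t : ℝ) : ℝ :=
  f t - t * f' t

theorem tangentIntercept_add_mul_le {f f' : ℝ → ℝ} (hf : ConvexOn ℝ (Set.Ioi 0) f)
    (hf' : ∀ t ∈ Set.Ioi (0 : ℝ), HasDerivAt f (f' t) t) {t s : ℝ} (ht : 0 < t) (hs : 0 < s) :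
    tangentIntercept f f' t + f' t * s ≤ f s := by
  have h := hf.add_mul_sub_le_of_hasDerivAt ht hs (hf' t ht)
  unfold tangentIntercept
  linear_combination h

section

variable [Fintype X]

theorem fDiv_eq_sum_tangentIntercept (f f' : ℝ → ℝ) (p : X → ℝ) {q : X → ℝ}
    (hq : ∀ y, q y ≠ 0) :
    fDiv f p q = ∑ y, q y * tangentIntercept f f' (p y / q y) + ∑ y, p y * f' (p y / q y) := by
  rw [fDiv, ← sum_add_distrib]
  refine sum_congr rfl fun y _ => ?_
  have := hq y
  unfold tangentIntercept
  field_simp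
  ring

theorem sum_tangentIntercept_le_fDiv {f f' : ℝ → ℝ} (hf : ConvexOn ℝ (Set.Ioi 0) f)
    (hf' : ∀ t ∈ Set.Ioi (0 : ℝ), HasDerivAt f (f' t) t) {p q r : X → ℝ} (hp : ∀ y, 0 < p y)
    (hq : ∀ y, 0 < q y) (hr : ∀ y, 0 < r y) :
    ∑ y, r y * tangentIntercept f f' (p y / q y) + ∑ y, p y * f' (p y / q y) ≤ fDiv f p r := by
  rw [fDiv, ← sum_add_distrib]
  refine sum_le_sum fun y _ => ?_
  have := (hr y).ne'
  calc r y * tangentIntercept f f' (p y / q y) + p y * f' (p y / q y)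
      = r y * (tangentIntercept f f' (p y / q y) + f' (p y / q y) * (p y / r y)) := by
        field_simp
    _ ≤ r y * f (p y / r y) := mul_le_mul_of_nonneg_left
        (tangentIntercept_add_mul_le hf hf' (div_pos (hp y) (hq y)) (div_pos (hp y) (hr y)))
        (hr y).le

theorem sum_sum_mul_of_isStochastic (p : X → ℝ) {Q : X → X → ℝ} (hQ : IsStochastic Q) :
    ∑ x, ∑ y, p x * Q x y = ∑ x, p x := by
  simp only [← mul_sum, hQ.2, mul_one]

theorem sum_marg_of_isStochastic (p : X → ℝ) {Q : X → X → ℝ} (hQ : IsStochastic Q) :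
    ∑ y, marg p Q y = ∑ x, p x := by
  rw [← sum_sum_mul_of_isStochastic p hQ, sum_comm]
  rfl

theorem sum_sum_mul_mul_div_of_marg_eq {p q : X → ℝ} {W : X → X → ℝ} (hq : ∀ y, q y ≠ 0)
    (hW : ∀ y, marg p W y = q y) (r : X → ℝ) :
    ∑ x, ∑ y, p x * W x y * (r y / q y) = ∑ y, r y := by
  rw [sum_comm]
  refine sum_congr rfl fun y _ => ?_
  rw [← sum_mul, ← marg, hW, mul_div_cancel₀ _ (hq y)]

theorem distortion_add_marg (p : X → ℝ) (d Q : X → X → ℝ) (a b : ℝ) (c : X → ℝ) :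
    distortion p (fun x y => a * d x y + b * c y) Q
      = a * distortion p d Q + b * ∑ y, marg p Q y * c y := by
  have hmarg : ∑ y, marg p Q y * c y = ∑ x, ∑ y, p x * Q x y * c y := by
    simp only [marg, sum_mul]
    exact sum_comm
  simp only [distortion, hmarg, mul_sum, ← sum_add_distrib]
  exact sum_congr rfl fun x _ => sum_congr rfl fun y _ => by ring

noncomputable def gibbsNormalizer (q : X → ℝ) (φ : X → X → ℝ) (x : X) : ℝ :=
  ∑ i, q i * exp (-φ x i)

noncomputable def gibbsChannel (q : X → ℝ) (φ : X → X → ℝ) (x y : X) : ℝ :=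
  q y * exp (-φ x y) / gibbsNormalizer q φ x

section GibbsChannel

variable {p q : X → ℝ} (φ : X → X → ℝ)

theorem gibbsNormalizer_pos (hq : ∀ y, 0 < q y) (x : X) : 0 < gibbsNormalizer q φ x :=
  sum_pos (fun i _ => mul_pos (hq i) (exp_pos _)) ⟨x, mem_univ x⟩

theorem gibbsChannel_pos (hq : ∀ y, 0 < q y) (x y : X) : 0 < gibbsChannel q φ x y :=
  div_pos (mul_pos (hq y) (exp_pos _)) (gibbsNormalizer_pos φ hq x)

theorem isStochastic_gibbsChannel (hq : ∀ y, 0 < q y) : IsStochastic (gibbsChannel q φ) :=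
  ⟨fun x y => (gibbsChannel_pos φ hq x y).le, fun x => by
    simp only [gibbsChannel, ← sum_div]
    exact div_self (gibbsNormalizer_pos φ hq x).ne'⟩

theorem marg_gibbsChannel (p : X → ℝ) (y : X) :
    marg p (gibbsChannel q φ) y = q y * ∑ x, p x * exp (-φ x y) / gibbsNormalizer q φ x := by
  rw [marg, mul_sum]
  refine sum_congr rfl fun x _ => ?_
  rw [gibbsChannel]
  ring

theorem log_gibbsChannel_div (hq : ∀ y, 0 < q y) (x y : X) :
    log (gibbsChannel q φ x y / q y) = -φ x y - log (gibbsNormalizer q φ x) := by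
  have := (hq y).ne'
  have hratio : gibbsChannel q φ x y / q y = exp (-φ x y) / gibbsNormalizer q φ x := by
    rw [gibbsChannel]
    field_simp
  rw [hratio, log_div (exp_pos _).ne' (gibbsNormalizer_pos φ hq x).ne', log_exp]

theorem mutInfo_add_distortion_gibbsChannel (hq : ∀ y, 0 < q y)
    (hW : ∀ y, marg p (gibbsChannel q φ) y = q y) :
    mutInfo p (gibbsChannel q φ) + distortion p φ (gibbsChannel q φ)
      = -∑ x, p x * log (gibbsNormalizer q φ x) := by
  rw [mutInfo, distortion, ← sum_add_distrib, ← sum_neg_distrib]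
  refine sum_congr rfl fun x _ => ?_
  calc ∑ y, p x * gibbsChannel q φ x y * log (gibbsChannel q φ x y / marg p (gibbsChannel q φ) y)
        + ∑ y, p x * gibbsChannel q φ x y * φ x y
      = -(p x * log (gibbsNormalizer q φ x)) * ∑ y, gibbsChannel q φ x y := by
        simp only [hW, log_gibbsChannel_div φ hq, ← sum_add_distrib, mul_sum]
        exact sum_congr rfl fun y _ => by ring
    _ = -(p x * log (gibbsNormalizer q φ x)) := by
        rw [(isStochastic_gibbsChannel φ hq).2 x, mul_one]

theorem mul_log_div_gibbsChannel_mul {Q : X → X → ℝ} {x y : X} {r : ℝ} (hpx : 0 < p x)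
    (hq : ∀ y, 0 < q y) (hQ : 0 ≤ Q x y) (hr : 0 < r) :
    p x * Q x y * log (p x * Q x y / (p x * gibbsChannel q φ x y * (r / q y)))
      = p x * Q x y * (log (Q x y / r) + φ x y + log (gibbsNormalizer q φ x)) := by
  rcases hQ.eq_or_lt with hzero | hpos
  · simp [← hzero]
  have hW := gibbsChannel_pos φ hq x y
  have := hpx.ne'
  have := hr.ne'
  have := hW.ne'
  have := (hq y).ne'
  have hratio : p x * Q x y / (p x * gibbsChannel q φ x y * (r / q y))
      = (Q x y / r) / (gibbsChannel q φ x y / q y) := by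
    field_simp
  rw [hratio, log_div (div_pos hpos hr).ne' (div_pos hW (hq y)).ne', log_gibbsChannel_div φ hq]
  ring

theorem neg_sum_mul_log_gibbsNormalizer_le (hp : ∀ x, 0 < p x) (hq : ∀ y, 0 < q y)
    (hW : ∀ y, marg p (gibbsChannel q φ) y = q y) {Q : X → X → ℝ} (hQ : IsStochastic Q)
    (hr : ∀ y, 0 < marg p Q y) :
    -∑ x, p x * log (gibbsNormalizer q φ x) ≤ mutInfo p Q + distortion p φ Q := by
  set r := marg p Q
  have hmass : ∑ z : X × X, p z.1 * Q z.1 z.2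
      = ∑ z : X × X, p z.1 * gibbsChannel q φ z.1 z.2 * (r z.2 / q z.2) := by
    rw [Fintype.sum_prod_type, Fintype.sum_prod_type, sum_sum_mul_of_isStochastic p hQ,
      sum_sum_mul_mul_div_of_marg_eq (fun y => (hq y).ne') hW, sum_marg_of_isStochastic p hQ]
  have hgibbs : 0 ≤ ∑ z : X × X, p z.1 * Q z.1 z.2
      * log (p z.1 * Q z.1 z.2 / (p z.1 * gibbsChannel q φ z.1 z.2 * (r z.2 / q z.2))) :=
    Real.sum_mul_log_div_nonneg (fun z => mul_nonneg (hp z.1).le (hQ.1 z.1 z.2))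
      (fun z => mul_pos (mul_pos (hp z.1) (gibbsChannel_pos φ hq z.1 z.2))
        (div_pos (hr z.2) (hq z.2))) hmass
  have hsplit : ∑ x, ∑ y, p x * Q x y * (log (Q x y / r y) + φ x y + log (gibbsNormalizer q φ x))
      = mutInfo p Q + distortion p φ Q + ∑ x, p x * log (gibbsNormalizer q φ x) := by
    simp only [mutInfo, distortion, ← sum_add_distrib]
    refine sum_congr rfl fun x _ => ?_
    rw [← mul_one (p x * _), ← hQ.2 x, mul_sum, ← sum_add_distrib]
    exact sum_congr rfl fun y _ => by ring
  have hterm x y := mul_log_div_gibbsChannel_mul φ (hp x) hq (hQ.1 x y) (hr y)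
  rw [Fintype.sum_prod_type] at hgibbs
  simp only [hterm, hsplit] at hgibbs
  linarith

theorem mutInfo_add_distortion_gibbsChannel_le (hp : ∀ x, 0 < p x) (hq : ∀ y, 0 < q y)
    (hW : ∀ y, marg p (gibbsChannel q φ) y = q y) {Q : X → X → ℝ} (hQ : IsStochastic Q)
    (hr : ∀ y, 0 < marg p Q y) :
    mutInfo p (gibbsChannel q φ) + distortion p φ (gibbsChannel q φ)
      ≤ mutInfo p Q + distortion p φ Q := by
  rw [mutInfo_add_distortion_gibbsChannel φ hq hW]
  exact neg_sum_mul_log_gibbsNormalizer_le φ hp hq hW hQ hr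

end GibbsChannel

theorem Vfun_gibbsChannel_le {p q : X → ℝ} {d φ : X → X → ℝ} {sD sP : ℝ} {f f' : ℝ → ℝ}
    (hp : ∀ x, 0 < p x) (hq : ∀ y, 0 < q y) (hsP : 0 ≤ sP) (hf : ConvexOn ℝ (Set.Ioi 0) f)
    (hf' : ∀ t ∈ Set.Ioi (0 : ℝ), HasDerivAt f (f' t) t)
    (hφ : ∀ x y, φ x y = sD * d x y + sP * tangentIntercept f f' (p y / q y))
    (hW : ∀ y, marg p (gibbsChannel q φ) y = q y)
    {Q : X → X → ℝ} (hQ : IsStochastic Q) (hr : ∀ y, 0 < marg p Q y) :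
    Vfun p d sD sP f (gibbsChannel q φ) ≤ Vfun p d sD sP f Q := by
  set W := gibbsChannel q φ
  set S := ∑ y, p y * f' (p y / q y)
  have hdist : ∀ Q', distortion p φ Q'
      = sD * distortion p d Q' + sP * ∑ y, marg p Q' y * tangentIntercept f f' (p y / q y) := by
    intro Q'
    rw [← distortion_add_marg]
    exact congrArg (distortion p · Q') (funext₂ hφ)
  have hVW : Vfun p d sD sP f W = mutInfo p W + distortion p φ W + sP * S := by
    rw [Vfun, hdist, funext hW, fDiv_eq_sum_tangentIntercept f f' p fun y => (hq y).ne']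
    ring
  have hVQ : mutInfo p Q + distortion p φ Q + sP * S ≤ Vfun p d sD sP f Q := by
    rw [Vfun, hdist]
    have := mul_le_mul_of_nonneg_left (sum_tangentIntercept_le_fDiv hf hf' hp hq hr) hsP
    linarith
  linarith [mutInfo_add_distortion_gibbsChannel_le φ hp hq hW hQ hr]

theorem mutInfo_eq_RDPF_of_forall_Vfun_le {p : X → ℝ} {d : X → X → ℝ} {sD sP : ℝ} {f : ℝ → ℝ}
    {Q : X → X → ℝ} (hsD : 0 ≤ sD) (hsP : 0 ≤ sP) (hQ : IsStochastic Q)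
    (hQm : ∀ y, 0 < marg p Q y)
    (hmin : ∀ Q', IsStochastic Q' → (∀ y, 0 < marg p Q' y) →
      Vfun p d sD sP f Q ≤ Vfun p d sD sP f Q') :
    (mutInfo p Q : EReal) = RDPF p d f (distortion p d Q) (fDiv f p (marg p Q)) := by
  refine le_antisymm (le_sInf ?_) (sInf_le ⟨Q, hQ, hQm, le_rfl, le_rfl, rfl⟩)
  rintro _ ⟨Q', hQ', hQ'm, hdist, hfDiv, rfl⟩
  have := hmin Q' hQ' hQ'm
  rw [Vfun, Vfun] at this
  exact EReal.coe_le_coe_iff.mpr (by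
    linarith [mul_le_mul_of_nonneg_left hdist hsD, mul_le_mul_of_nonneg_left hfDiv hsP])

end

theorem optimality_condition_attains_RDPF_general [Fintype X]
    (p : X → ℝ) (hp : ∀ x, 0 < p x)
    (d : X → X → ℝ)
    (sD sP : ℝ) (hsD : 0 ≤ sD) (hsP : 0 ≤ sP)
    (f f' : ℝ → ℝ) (hfconv : ConvexOn ℝ (Set.Ioi 0) f)
    (hf' : ∀ x ∈ Set.Ioi (0 : ℝ), HasDerivAt f (f' x) x)
    (q : X → ℝ) (hq : ∀ y, 0 < q y)
    (A : X → X → ℝ)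
    (hA : ∀ x y, A x y = Real.exp (-(sD * d x y) - sP *
        (f (p y / q y) - p y / q y * f' (p y / q y))))
    (hc : ∀ y, ∑ x, p x * A x y / (∑ i, q i * A x i) = 1)
    (Q : X → X → ℝ) (hQdef : ∀ x y, Q x y = q y * A x y / ∑ i, q i * A x i) :
    (∀ y, marg p Q y = q y)
    ∧ (∀ Q' : X → X → ℝ, IsStochastic Q' → (∀ y, 0 < marg p Q' y) →
        mutInfo p Q + sD * distortion p d Q + sP * fDiv f p q
          ≤ mutInfo p Q' + sD * distortion p d Q' + sP * fDiv f p (marg p Q'))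
    ∧ (mutInfo p Q : EReal) = RDPF p d f (distortion p d Q) (fDiv f p q) := by
  set φ : X → X → ℝ := fun x y => sD * d x y + sP * tangentIntercept f f' (p y / q y)
  have hAφ : A = fun x y => exp (-φ x y) := by
    funext x y
    simp only [hA, φ, tangentIntercept]
    ring_nf
  obtain rfl : Q = gibbsChannel q φ := by
    funext x y
    rw [hQdef, hAφ]
    rfl
  have hc' : ∀ y, ∑ x, p x * exp (-φ x y) / gibbsNormalizer q φ x = 1 := by
    simpa only [hAφ, gibbsNormalizer] using hc
  have hmarg : ∀ y, marg p (gibbsChannel q φ) y = q y := fun y => by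
    rw [marg_gibbsChannel, hc', mul_one]
  have hmin : ∀ Q', IsStochastic Q' → (∀ y, 0 < marg p Q' y) →
      Vfun p d sD sP f (gibbsChannel q φ) ≤ Vfun p d sD sP f Q' := fun _ =>
    Vfun_gibbsChannel_le hp hq hsP hfconv hf' (fun _ _ => rfl) hmarg
  have hfDiv : fDiv f p (marg p (gibbsChannel q φ)) = fDiv f p q := by
    simp only [fDiv, hmarg]
  refine ⟨hmarg, fun Q' hQ' hr => ?_, ?_⟩
  · simpa only [Vfun, hfDiv] using hmin Q' hQ' hr
  · rw [← hfDiv]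
    exact mutInfo_eq_RDPF_of_forall_Vfun_le hsD hsP (isStochastic_gibbsChannel φ hq)
      (fun y => hmarg y ▸ hq y) hmin

/-- If `c(y) = Σ_x p(x)A(x,y)/(Σ_i q(i)A(x,i)) = 1` for every `y`, then the induced transition
matrix `Q` has output marginal `q`, minimizes the Lagrangian, and attains the
rate-distortion-perception function at its own operating point. -/
theorem optimality_condition_attains_RDPF [Fintype X] [Nonempty X]
    (p : X → ℝ) (hp : ∀ x, 0 < p x) (hp1 : ∑ x, p x = 1)
    (d : X → X → ℝ) (hd : ∀ x y, 0 ≤ d x y)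
    (sD sP : ℝ) (hsD : 0 ≤ sD) (hsP : 0 ≤ sP)
    (f f' : ℝ → ℝ) (hfconv : ConvexOn ℝ (Set.Ioi 0) f)
    (hf' : ∀ x ∈ Set.Ioi (0 : ℝ), HasDerivAt f (f' x) x) (hf1 : f 1 = 0)
    (q : X → ℝ) (hq : ∀ y, 0 < q y) (hq1 : ∑ y, q y = 1)
    (A : X → X → ℝ)
    (hA : ∀ x y, A x y = Real.exp (-(sD * d x y) - sP *
        (f (p y / q y) - p y / q y * f' (p y / q y))))
    (hc : ∀ y, ∑ x, p x * A x y / (∑ i, q i * A x i) = 1)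
    (Q : X → X → ℝ) (hQdef : ∀ x y, Q x y = q y * A x y / ∑ i, q i * A x i) :
    (∀ y, marg p Q y = q y)
    ∧ (∀ Q' : X → X → ℝ, IsStochastic Q' → (∀ y, 0 < marg p Q' y) →
        mutInfo p Q + sD * distortion p d Q + sP * fDiv f p q
          ≤ mutInfo p Q' + sD * distortion p d Q' + sP * fDiv f p (marg p Q'))
    ∧ (mutInfo p Q : EReal) = RDPF p d f (distortion p d Q) (fDiv f p q) :=
  optimality_condition_attains_RDPF_general p hp d sD sP hsD hsP f f' hfconv hf' q hq A hA hc Q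
    hQdef

end RDP
end

section
/- In the setting of the Optimal Alternating Minimization iteration: let (q^{(n)})_{n≥0} be probability vectors on X with positive entries satisfying q^{(n+1)}(y) = q^{(n)}(y)·Σ_x p(x)A_n(x,y)/(Σ_i q^{(n)}(i)A_n(x,i)) with A_n(x,y) := exp(−s_D·d(x,y) − s_P·g(p(y), q^{(n+1)}(y))), and set Q^{(n+1)}(y|x) := q^{(n)}(y)A_n(x,y)/(Σ_i q^{(n)}(i)A_n(x,i)). Assume q* is a probability vector with positive entries such that, with A*(x,y) := exp(−s_D·d(x,y) − s_P·g(p(y), q*(y))), Σ_x p(x)A*(x,y)/(Σ_i q*(i)A*(x,i)) = 1 for every y, and set Q*(y|x) := q*(y)A*(x,y)/Σ_i q*(i)A*(x,i) and V(Q) := I(p,Q) + s_D·Σ_{x,y} p(x)Q(y|x)d(x,y) + s_P·D_f(p||Qm). Define W_n := s_P·Σ_y p(y)·f'(p(y)/q^{(n+1)}(y)) − Σ_x p(x)·log(Σ_y q^{(n)}(y)A_n(x,y)). Then for every n ≥ 1: 0 ≤ W_n − V(Q*) ≤ Σ_{x,y} p(x)Q*(y|x)·log(Q^{(n+1)}(y|x)/Q^{(n)}(y|x)).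 -/
/-!
At the fixed point `q*` the Lagrangian of the Gibbs channel `Q*` evaluates to
`V(Q*) = s_P Σ p f'(p/q*) − Σ p log Z*`, the same expression as `W_n` with `q*` in place of the
iterates. The difference of two such log-partition terms is controlled by Jensen's inequality in
the input `x`, for each fixed output `y`, with the weights `p(x) Q(y|x)` of one of the two Gibbs
channels. What is left over is a Kullback–Leibler divergence between consecutive iterates and
`s_P` times sums of Bregman divergences of `f`, both of which have a sign.
-/

namespace RDP

variable {X : Type*}

open Finset Real

theorem _root_.ConvexOn.add_mul_sub_le_of_hasDerivAt_s4 {S : Set ℝ} {f : ℝ → ℝ} {f' a b : ℝ}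
    (hf : ConvexOn ℝ S f) (ha : a ∈ S) (hb : b ∈ S) (hd : HasDerivAt f f' a) :
    f a + f' * (b - a) ≤ f b := by
  rcases lt_trichotomy a b with hab | rfl | hab
  · have h := hf.le_slope_of_hasDerivAt ha hb hab hd
    rw [slope_def_field, le_div_iff₀ (sub_pos.2 hab)] at h
    linarith
  · simp
  · have h := hf.slope_le_of_hasDerivAt hb ha hab hd
    rw [slope_def_field, div_le_iff₀ (sub_pos.2 hab)] at h
    linarith

/-- The right-hand side is `u` times the Bregman divergence of `f` between `a / u` and `a / v`. -/
theorem tangentIntercept_bregman_nonneg {f f' : ℝ → ℝ} (hf : ConvexOn ℝ (Set.Ioi 0) f)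
    (hf' : ∀ t ∈ Set.Ioi (0 : ℝ), HasDerivAt f (f' t) t) {a u v : ℝ} (ha : 0 < a) (hu : 0 < u)
    (hv : 0 < v) :
    0 ≤ u * (tangentIntercept f f' (a / u) - tangentIntercept f f' (a / v)) +
      a * (f' (a / u) - f' (a / v)) := by
  have hau : (0 : ℝ) < a / u := div_pos ha hu
  have hav : (0 : ℝ) < a / v := div_pos ha hv
  have htan := hf.add_mul_sub_le_of_hasDerivAt_s4 hav hau (hf' _ hav)
  have hdiv : u * (a / u) = a := mul_div_cancel₀ a hu.ne'
  calc (0 : ℝ) ≤ u * (f (a / u) - (f (a / v) + f' (a / v) * (a / u - a / v))) :=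
        mul_nonneg hu.le (sub_nonneg.2 htan)
    _ = _ := by
        rw [tangentIntercept, tangentIntercept]
        linear_combination (f' (a / u) - f' (a / v)) * hdiv

theorem sum_mul_log_le_sum_mul_log_div {ι : Type*} [Fintype ι] {u a : ι → ℝ}
    (hu : ∀ i, 0 ≤ u i) (ha : ∀ i, 0 < a i) :
    ∑ i, u i * log (a i) ≤ (∑ i, u i) * log ((∑ i, u i * a i) / ∑ i, u i) := by
  set c := ∑ i, u i
  rcases (sum_nonneg fun i _ => hu i).eq_or_lt with hc | hc
  · have hu0 : ∀ i, u i = 0 := fun i =>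
      (sum_eq_zero_iff_of_nonneg fun i _ => hu i).1 hc.symm i (mem_univ i)
    simp [hu0]
  · have hJ := strictConcaveOn_log_Ioi.concaveOn.le_map_sum (t := univ) (w := fun i => u i / c)
      (p := a) (fun i _ => div_nonneg (hu i) hc.le) (by rw [← sum_div, div_self hc.ne'])
      fun i _ => ha i
    simp only [smul_eq_mul] at hJ
    calc ∑ i, u i * log (a i) = c * ∑ i, u i / c * log (a i) := by
          rw [mul_sum]; exact sum_congr rfl fun i _ => by rw [← mul_assoc, mul_div_cancel₀ _ hc.ne']
      _ ≤ c * log (∑ i, u i / c * a i) := mul_le_mul_of_nonneg_left hJ hc.le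
      _ = c * log ((∑ i, u i * a i) / c) := by
          rw [sum_div]; exact congrArg _ (congrArg _ (sum_congr rfl fun i _ => by ring))

section Channels

variable [Fintype X]

theorem sum_marg_mul_add {p : X → ℝ} {Q : X → X → ℝ} (hQ : ∀ x, ∑ y, Q x y = 1) (a b : X → ℝ) :
    ∑ x, ∑ y, p x * Q x y * (a y + b x) = ∑ y, marg p Q y * a y + ∑ x, p x * b x := by
  simp only [mul_add, sum_add_distrib, marg, sum_mul]
  rw [sum_comm]
  congr 1
  refine sum_congr rfl fun x _ => ?_
  rw [← sum_mul, ← mul_sum, hQ, mul_one]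

theorem sum_marg {p : X → ℝ} {Q : X → X → ℝ} (hQ : ∀ x, ∑ y, Q x y = 1) :
    ∑ y, marg p Q y = ∑ x, p x := by
  simp only [marg]
  rw [sum_comm]
  exact sum_congr rfl fun x _ => by rw [← mul_sum, hQ, mul_one]

theorem sum_mul_log_le_sum_marg_mul_log {p φ : X → ℝ} {Q : X → X → ℝ} (hp : ∀ x, 0 ≤ p x)
    (hQ : IsStochastic Q) (hφ : ∀ x, 0 < φ x) :
    ∑ x, p x * log (φ x) ≤ ∑ y, marg p Q y * log ((∑ x, p x * Q x y * φ x) / marg p Q y) := by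
  calc ∑ x, p x * log (φ x) = ∑ y, ∑ x, p x * Q x y * log (φ x) := by
        rw [sum_comm]; simpa using (sum_marg_mul_add (p := p) hQ.2 0 fun x => log (φ x)).symm
    _ ≤ _ := sum_le_sum fun y _ =>
        sum_mul_log_le_sum_mul_log_div (fun x => mul_nonneg (hp x) (hQ.1 x y)) hφ

noncomputable def partition (q : X → ℝ) (B : X → X → ℝ) (x : X) : ℝ :=
  ∑ y, q y * B x y

noncomputable def gibbs (q : X → ℝ) (B : X → X → ℝ) (x y : X) : ℝ :=
  q y * B x y / partition q B x

section Gibbs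

variable {p q r c : X → ℝ} {B C : X → X → ℝ}

theorem partition_pos (hq : ∀ y, 0 < q y) (hB : ∀ x y, 0 < B x y) (x : X) :
    0 < partition q B x :=
  sum_pos (fun y _ => mul_pos (hq y) (hB x y)) ⟨x, mem_univ x⟩

theorem gibbs_pos (hq : ∀ y, 0 < q y) (hB : ∀ x y, 0 < B x y) (x y : X) : 0 < gibbs q B x y :=
  div_pos (mul_pos (hq y) (hB x y)) (partition_pos hq hB x)

theorem isStochastic_gibbs (hq : ∀ y, 0 < q y) (hB : ∀ x y, 0 < B x y) :
    IsStochastic (gibbs q B) :=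
  ⟨fun x y => (gibbs_pos hq hB x y).le, fun x => by
    simp only [gibbs, ← sum_div]; exact div_self (partition_pos hq hB x).ne'⟩

theorem marg_gibbs (y : X) :
    marg p (gibbs q B) y = q y * ∑ x, p x * B x y / partition q B x := by
  rw [marg, mul_sum]
  exact sum_congr rfl fun x _ => by rw [gibbs]; ring

theorem marg_gibbs_pos (hp : ∀ x, 0 < p x) (hq : ∀ y, 0 < q y) (hB : ∀ x y, 0 < B x y) (y : X) :
    0 < marg p (gibbs q B) y :=
  sum_pos (fun x _ => mul_pos (hp x) (gibbs_pos hq hB x y)) ⟨y, mem_univ y⟩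

theorem log_gibbs (hq : ∀ y, 0 < q y) (hB : ∀ x y, 0 < B x y) (x y : X) :
    log (gibbs q B x y) = log (q y) + log (B x y) - log (partition q B x) := by
  rw [gibbs, log_div (mul_pos (hq y) (hB x y)).ne' (partition_pos hq hB x).ne',
    log_mul (hq y).ne' (hB x y).ne']

theorem log_gibbs_div_gibbs (hq : ∀ y, 0 < q y) (hr : ∀ y, 0 < r y) (hC : ∀ x y, 0 < C x y)
    (hBC : ∀ x y, B x y = exp (c y) * C x y) (x y : X) :
    log (gibbs q B x y / gibbs r C x y) =
      c y + log (q y / r y) + log (partition r C x / partition q B x) := by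
  have hB : ∀ x y, 0 < B x y := fun x y => hBC x y ▸ mul_pos (exp_pos _) (hC x y)
  rw [log_div (gibbs_pos hq hB x y).ne' (gibbs_pos hr hC x y).ne', log_gibbs hq hB,
    log_gibbs hr hC, hBC, log_mul (exp_pos _).ne' (hC x y).ne', log_exp,
    log_div (hq y).ne' (hr y).ne', log_div (partition_pos hr hC x).ne'
      (partition_pos hq hB x).ne']
  ring

/-- Jensen's inequality in `x`, for each `y`, with the weights `p x * gibbs q B x y`. -/
theorem sum_mul_log_partition_div_le (hp : ∀ x, 0 < p x) (hq : ∀ y, 0 < q y)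
    (hr : ∀ y, 0 < r y) (hC : ∀ x y, 0 < C x y) (hBC : ∀ x y, B x y = exp (c y) * C x y) :
    ∑ x, p x * log (partition q B x / partition r C x) ≤
      ∑ y, marg p (gibbs q B) y * (c y + log (q y / marg p (gibbs q B) y) +
        log (marg p (gibbs r C) y / r y)) := by
  have hB : ∀ x y, 0 < B x y := fun x y => hBC x y ▸ mul_pos (exp_pos _) (hC x y)
  refine (sum_mul_log_le_sum_marg_mul_log (fun x => (hp x).le) (isStochastic_gibbs hq hB)
    fun x => div_pos (partition_pos hq hB x) (partition_pos hr hC x)).trans_eq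
    (sum_congr rfl fun y _ => congrArg _ ?_)
  have hm := marg_gibbs_pos hp hq hB y
  have hmC := marg_gibbs_pos hp hr hC y
  have hsum : (∑ x, p x * gibbs q B x y * (partition q B x / partition r C x)) /
      marg p (gibbs q B) y =
        exp (c y) * (q y / marg p (gibbs q B) y) * (marg p (gibbs r C) y / r y) := by
    rw [marg_gibbs (B := C), mul_div_cancel_left₀ _ (hr y).ne', sum_div, mul_sum]
    refine sum_congr rfl fun x _ => ?_
    have := (partition_pos hq hB x).ne'
    have := (partition_pos hr hC x).ne'
    rw [gibbs, hBC]
    field_simp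
  rw [hsum, log_mul (mul_pos (exp_pos _) (div_pos (hq y) hm)).ne' (div_pos hmC (hr y)).ne',
    log_mul (exp_pos _).ne' (div_pos (hq y) hm).ne', log_exp]

theorem sum_mul_log_partition_div (hq : ∀ y, 0 < q y)
    (hr : ∀ y, 0 < r y) (hB : ∀ x y, 0 < B x y) (hC : ∀ x y, 0 < C x y) :
    ∑ x, p x * log (partition q B x / partition r C x) =
      ∑ x, p x * log (partition q B x) - ∑ x, p x * log (partition r C x) := by
  rw [← sum_sub_distrib]
  exact sum_congr rfl fun x _ => by
    rw [log_div (partition_pos hq hB x).ne' (partition_pos hr hC x).ne', mul_sub]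

end Gibbs

end Channels

noncomputable def oamKernel (p : X → ℝ) (d : X → X → ℝ) (sD sP : ℝ) (f f' : ℝ → ℝ)
    (r : X → ℝ) (x y : X) : ℝ :=
  exp (-(sD * d x y) - sP * tangentIntercept f f' (p y / r y))

/-- `W_n` of the paper is `dualValue p d sD sP f f' (q n) (q (n + 1))`. -/
noncomputable def dualValue [Fintype X] (p : X → ℝ) (d : X → X → ℝ) (sD sP : ℝ) (f f' : ℝ → ℝ)
    (q r : X → ℝ) : ℝ :=
  sP * ∑ y, p y * f' (p y / r y) - ∑ x, p x * log (partition q (oamKernel p d sD sP f f' r) x)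

section OAM

variable {p : X → ℝ} {d : X → X → ℝ} {sD sP : ℝ} {f f' : ℝ → ℝ}

theorem oamKernel_pos (r : X → ℝ) (x y : X) : 0 < oamKernel p d sD sP f f' r x y :=
  exp_pos _

theorem oamKernel_eq_exp_mul (r s : X → ℝ) (x y : X) :
    oamKernel p d sD sP f f' s x y =
      exp (sP * (tangentIntercept f f' (p y / r y) - tangentIntercept f f' (p y / s y))) *
        oamKernel p d sD sP f f' r x y := by
  rw [oamKernel, oamKernel, ← exp_add]
  ring_nf

variable [Fintype X]

theorem Vfun_gibbs_oamKernel_eq_dualValue {q : X → ℝ} (hq : ∀ y, 0 < q y)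
    (hfix : marg p (gibbs q (oamKernel p d sD sP f f' q)) = q) :
    Vfun p d sD sP f (gibbs q (oamKernel p d sD sP f f' q)) = dualValue p d sD sP f f' q q := by
  set K := oamKernel p d sD sP f f' q
  set Q := gibbs q K
  have hK : ∀ x y, 0 < K x y := oamKernel_pos q
  have hlog : ∀ x y, log (Q x y / marg p Q y) = -(sD * d x y) +
      (-(sP * tangentIntercept f f' (p y / q y)) + -log (partition q K x)) := fun x y => by
    rw [hfix, log_div (gibbs_pos hq hK x y).ne' (hq y).ne', log_gibbs hq hK]
    simp only [K, oamKernel, log_exp]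
    ring
  have hmut : mutInfo p Q = -(sD * distortion p d Q) +
      (∑ y, q y * -(sP * tangentIntercept f f' (p y / q y)) +
        ∑ x, p x * -log (partition q K x)) := by
    have hsplit := sum_marg_mul_add (p := p) (isStochastic_gibbs hq hK).2
      (fun y => -(sP * tangentIntercept f f' (p y / q y))) fun x => -log (partition q K x)
    rw [hfix] at hsplit
    rw [← hsplit, distortion, mul_sum, ← sum_neg_distrib, ← sum_add_distrib]
    refine sum_congr rfl fun x _ => ?_
    rw [mul_sum, ← sum_neg_distrib, ← sum_add_distrib]
    exact sum_congr rfl fun y _ => by rw [hlog]; ring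
  have hι : ∀ y, q y * tangentIntercept f f' (p y / q y) =
      q y * f (p y / q y) - p y * f' (p y / q y) := fun y => by
    rw [tangentIntercept, mul_sub, ← mul_assoc, mul_div_cancel₀ _ (hq y).ne']
  rw [Vfun, hmut, fDiv, dualValue, hfix]
  simp only [mul_neg, sum_neg_distrib, mul_left_comm (q _) sP, ← mul_sum, hι, sum_sub_distrib]
  ring

theorem dualValue_fixedPoint_le (hp : ∀ x, 0 < p x) (hp1 : ∑ x, p x = 1) (hsP : 0 ≤ sP)
    (hf : ConvexOn ℝ (Set.Ioi 0) f) (hf' : ∀ t ∈ Set.Ioi (0 : ℝ), HasDerivAt f (f' t) t)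
    {q r qs : X → ℝ} (hq : ∀ y, 0 < q y) (hq1 : ∑ y, q y = 1) (hr : ∀ y, 0 < r y)
    (hqs : ∀ y, 0 < qs y) (hstep : marg p (gibbs q (oamKernel p d sD sP f f' r)) = r)
    (hfix : marg p (gibbs qs (oamKernel p d sD sP f f' qs)) = qs) :
    dualValue p d sD sP f f' qs qs ≤ dualValue p d sD sP f f' q r := by
  have hjensen := sum_mul_log_partition_div_le (B := oamKernel p d sD sP f f' r) hp hq hqs
    (oamKernel_pos qs) (oamKernel_eq_exp_mul qs r)
  rw [hstep, hfix, sum_mul_log_partition_div hq hqs (oamKernel_pos r) (oamKernel_pos qs)] at hjensen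
  have hr1 : ∑ y, r y = 1 := by
    rw [← hstep, sum_marg (isStochastic_gibbs hq (oamKernel_pos r)).2, hp1]
  have hKL : ∑ y, r y * log (q y / r y) ≤ 0 := by
    have h := sum_mul_log_le_sum_mul_log_div (fun y => (hr y).le) fun y => div_pos (hq y) (hr y)
    rwa [sum_congr rfl fun y _ => mul_div_cancel₀ (q y) (hr y).ne', hq1, hr1, div_one, log_one,
      mul_zero] at h
  have hbregman := sum_nonneg fun y (_ : y ∈ univ) =>
    tangentIntercept_bregman_nonneg hf hf' (hp y) (hr y) (hqs y)
  simp only [div_self (hqs _).ne', log_one, add_zero, mul_add, mul_sub, sum_add_distrib,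
    sum_sub_distrib, mul_left_comm (r _) sP, ← mul_sum] at hjensen hbregman
  unfold dualValue
  linarith [mul_nonneg hsP hbregman]

theorem dualValue_sub_fixedPoint_le (hp : ∀ x, 0 < p x) (hsP : 0 ≤ sP)
    (hf : ConvexOn ℝ (Set.Ioi 0) f) (hf' : ∀ t ∈ Set.Ioi (0 : ℝ), HasDerivAt f (f' t) t)
    {q r s qs : X → ℝ} (hq : ∀ y, 0 < q y) (hr : ∀ y, 0 < r y) (hs : ∀ y, 0 < s y)
    (hqs : ∀ y, 0 < qs y) (hstep : marg p (gibbs q (oamKernel p d sD sP f f' r)) = r)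
    (hfix : marg p (gibbs qs (oamKernel p d sD sP f f' qs)) = qs) :
    dualValue p d sD sP f f' r s - dualValue p d sD sP f f' qs qs ≤
      ∑ x, ∑ y, p x * gibbs qs (oamKernel p d sD sP f f' qs) x y *
        log (gibbs r (oamKernel p d sD sP f f' s) x y /
          gibbs q (oamKernel p d sD sP f f' r) x y) := by
  have hjensen := sum_mul_log_partition_div_le (B := oamKernel p d sD sP f f' qs) hp hqs hq
    (oamKernel_pos r) (oamKernel_eq_exp_mul r qs)
  rw [hstep, hfix, sum_mul_log_partition_div hqs hq (oamKernel_pos qs) (oamKernel_pos r)] at hjensen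
  have hbregman := sum_nonneg fun y (_ : y ∈ univ) =>
    tangentIntercept_bregman_nonneg hf hf' (hp y) (hqs y) (hs y)
  rw [sum_congr rfl fun x _ => sum_congr rfl fun y _ => by
      rw [log_gibbs_div_gibbs hr hq (oamKernel_pos r) (oamKernel_eq_exp_mul r s)],
    sum_marg_mul_add (isStochastic_gibbs hqs (oamKernel_pos qs)).2, hfix,
    sum_mul_log_partition_div hq hr (oamKernel_pos r) (oamKernel_pos s)]
  simp only [div_self (hqs _).ne', log_one, add_zero, mul_add, mul_sub, sum_add_distrib,
    sum_sub_distrib, mul_left_comm (qs _) sP, ← mul_sum] at hjensen hbregman ⊢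
  unfold dualValue
  linarith [mul_nonneg hsP hbregman]

end OAM

theorem OAM_sandwich_bound_general [Fintype X]
    (p : X → ℝ) (hp : ∀ x, 0 < p x) (hp1 : ∑ x, p x = 1)
    (d : X → X → ℝ)
    (sD sP : ℝ) (hsP : 0 ≤ sP)
    (f f' : ℝ → ℝ) (hfconv : ConvexOn ℝ (Set.Ioi 0) f)
    (hf' : ∀ x ∈ Set.Ioi (0 : ℝ), HasDerivAt f (f' x) x)
    (qseq : ℕ → X → ℝ) (hqpos : ∀ n y, 0 < qseq n y) (hqsum : ∀ n, ∑ y, qseq n y = 1)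
    (A : ℕ → X → X → ℝ)
    (hA : ∀ n x y, A n x y = Real.exp (-(sD * d x y) - sP *
        (f (p y / qseq (n + 1) y) - p y / qseq (n + 1) y * f' (p y / qseq (n + 1) y))))
    (hiter : ∀ n y, qseq (n + 1) y =
        qseq n y * ∑ x, p x * A n x y / (∑ i, qseq n i * A n x i))
    (Qit : ℕ → X → X → ℝ)
    (hQit : ∀ n x y, Qit (n + 1) x y = qseq n y * A n x y / ∑ i, qseq n i * A n x i)
    (qstar : X → ℝ) (hqs : ∀ y, 0 < qstar y)
    (As : X → X → ℝ)
    (hAs : ∀ x y, As x y = Real.exp (-(sD * d x y) - sP *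
        (f (p y / qstar y) - p y / qstar y * f' (p y / qstar y))))
    (hfix : ∀ y, ∑ x, p x * As x y / (∑ i, qstar i * As x i) = 1)
    (Qstar : X → X → ℝ)
    (hQstar : ∀ x y, Qstar x y = qstar y * As x y / ∑ i, qstar i * As x i)
    (W : ℕ → ℝ)
    (hW : ∀ n, W n = sP * ∑ y, p y * f' (p y / qseq (n + 1) y)
        - ∑ x, p x * Real.log (∑ y, qseq n y * A n x y)) :
    ∀ n : ℕ,
      0 ≤ W (n + 1) - Vfun p d sD sP f Qstar ∧
      W (n + 1) - Vfun p d sD sP f Qstar ≤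
        ∑ x, ∑ y, p x * Qstar x y * Real.log (Qit (n + 2) x y / Qit (n + 1) x y) := by
  intro n
  obtain rfl : As = oamKernel p d sD sP f f' qstar := funext₂ hAs
  obtain rfl : Qstar = gibbs qstar (oamKernel p d sD sP f f' qstar) := funext₂ hQstar
  obtain rfl : A = fun n => oamKernel p d sD sP f f' (qseq (n + 1)) :=
    funext fun n => funext₂ (hA n)
  have hQit' : ∀ n, Qit (n + 1) = gibbs (qseq n) (oamKernel p d sD sP f f' (qseq (n + 1))) :=
    fun n => funext₂ (hQit n)
  have hstep : ∀ n, marg p (gibbs (qseq n) (oamKernel p d sD sP f f' (qseq (n + 1)))) =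
      qseq (n + 1) := fun n => funext fun y => (marg_gibbs y).trans (hiter n y).symm
  have hfix' : marg p (gibbs qstar (oamKernel p d sD sP f f' qstar)) = qstar :=
    funext fun y => (marg_gibbs y).trans ((congrArg (qstar y * ·) (hfix y)).trans (mul_one _))
  have hWn : W (n + 1) = dualValue p d sD sP f f' (qseq (n + 1)) (qseq (n + 2)) := hW (n + 1)
  rw [hWn, Vfun_gibbs_oamKernel_eq_dualValue hqs hfix', hQit', hQit']
  exact ⟨sub_nonneg.2 (dualValue_fixedPoint_le hp hp1 hsP hfconv hf' (hqpos _) (hqsum _)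
      (hqpos _) hqs (hstep _) hfix'),
    dualValue_sub_fixedPoint_le hp hsP hfconv hf' (hqpos _) (hqpos _) (hqpos _) hqs (hstep _)
      hfix'⟩

/-- Sandwich bound in the OAM convergence proof: for every `n ≥ 1`,
`0 ≤ W_n − V(Q*) ≤ Σ_{x,y} p(x)Q*(y|x) log(Q^{(n+1)}(y|x)/Q^{(n)}(y|x))`
(stated with index `n + 1`, which ranges over all integers `≥ 1`). -/
theorem OAM_sandwich_bound [Fintype X] [Nonempty X]
    (p : X → ℝ) (hp : ∀ x, 0 < p x) (hp1 : ∑ x, p x = 1)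
    (d : X → X → ℝ) (hd : ∀ x y, 0 ≤ d x y)
    (sD sP : ℝ) (hsD : 0 ≤ sD) (hsP : 0 ≤ sP)
    (f f' : ℝ → ℝ) (hfconv : ConvexOn ℝ (Set.Ioi 0) f)
    (hf' : ∀ x ∈ Set.Ioi (0 : ℝ), HasDerivAt f (f' x) x) (hf1 : f 1 = 0)
    (qseq : ℕ → X → ℝ) (hqpos : ∀ n y, 0 < qseq n y) (hqsum : ∀ n, ∑ y, qseq n y = 1)
    (A : ℕ → X → X → ℝ)
    (hA : ∀ n x y, A n x y = Real.exp (-(sD * d x y) - sP *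
        (f (p y / qseq (n + 1) y) - p y / qseq (n + 1) y * f' (p y / qseq (n + 1) y))))
    (hiter : ∀ n y, qseq (n + 1) y =
        qseq n y * ∑ x, p x * A n x y / (∑ i, qseq n i * A n x i))
    (Qit : ℕ → X → X → ℝ)
    (hQit : ∀ n x y, Qit (n + 1) x y = qseq n y * A n x y / ∑ i, qseq n i * A n x i)
    (qstar : X → ℝ) (hqs : ∀ y, 0 < qstar y) (hqs1 : ∑ y, qstar y = 1)
    (As : X → X → ℝ)
    (hAs : ∀ x y, As x y = Real.exp (-(sD * d x y) - sP *
        (f (p y / qstar y) - p y / qstar y * f' (p y / qstar y))))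
    (hfix : ∀ y, ∑ x, p x * As x y / (∑ i, qstar i * As x i) = 1)
    (Qstar : X → X → ℝ)
    (hQstar : ∀ x y, Qstar x y = qstar y * As x y / ∑ i, qstar i * As x i)
    (W : ℕ → ℝ)
    (hW : ∀ n, W n = sP * ∑ y, p y * f' (p y / qseq (n + 1) y)
        - ∑ x, p x * Real.log (∑ y, qseq n y * A n x y)) :
    ∀ n : ℕ,
      0 ≤ W (n + 1) - Vfun p d sD sP f Qstar ∧
      W (n + 1) - Vfun p d sD sP f Qstar ≤
        ∑ x, ∑ y, p x * Qstar x y * Real.log (Qit (n + 2) x y / Qit (n + 1) x y) :=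
  OAM_sandwich_bound_general p hp hp1 d sD sP hsP f f' hfconv hf' qseq hqpos hqsum A hA hiter Qit
    hQit qstar hqs As hAs hfix Qstar hQstar W hW

end RDP
end
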